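/- Let ς, τ, δ, z ∈ ℂ with Re(ς) > 0 and Re(τ) > 1. Then (τ - ςδ - 1)·E^δ_{ς,τ}(z) = E^δ_{ς,τ-1}(z) - ςδ·E^{δ+1}_{ς,τ}(z). -/

import Mathlib

set_option maxHeartbeats 1600000

open Real Filter Finset MeasureTheory Set

noncomputable def prabTerm (ς τ δ z : ℂ) (k : ℕ) : ℂ :=
  (∏ i ∈ Finset.range k, (δ + i)) * z ^ k /
    ((k.factorial : ℂ) * Complex.Gamma (ς * k + τ))

/-- The complex Prabhakar (three-parameter Mittag-Leffler) function. -/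
noncomputable def cPrab (ς τ δ z : ℂ) : ℂ := ∑' k : ℕ, prabTerm ς τ δ z k

-- telescoping sum bound
lemma sum_inv_sq_le (x : ℝ) (hx : 1 ≤ x) (n : ℕ) :
    ∑ j ∈ Finset.range (n + 1), 1 / (x + j) ^ 2 ≤ 2 / x := by
  have hx0 : (0:ℝ) < x := by linarith
  rw [Finset.sum_range_succ']
  have h0 : 1 / (x + (0:ℕ)) ^ 2 ≤ 1 / x := by
    push_cast
    rw [add_zero]
    apply one_div_le_one_div_of_le hx0
    nlinarith
  have h1 : ∑ j ∈ Finset.range n, 1 / (x + (j + 1 : ℕ)) ^ 2 ≤ 1 / x := by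
    have step : ∀ j ∈ Finset.range n, 1 / (x + (j + 1 : ℕ)) ^ 2 ≤
        (fun j : ℕ => 1 / (x + j)) j - (fun j : ℕ => 1 / (x + j)) (j + 1) := by
      intro j _
      have hj0 : (0:ℝ) < x + j := by positivity
      have hj1 : (0:ℝ) < x + (j + 1 : ℕ) := by positivity
      push_cast at hj1 ⊢
      rw [div_sub_div _ _ (ne_of_gt hj0) (ne_of_gt hj1)]
      rw [div_le_div_iff₀ (by positivity) (by positivity)]
      ring_nf
      nlinarith
    calc ∑ j ∈ Finset.range n, 1 / (x + (j + 1 : ℕ)) ^ 2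
        ≤ ∑ j ∈ Finset.range n, ((fun j : ℕ => 1 / (x + j)) j - (fun j : ℕ => 1 / (x + j)) (j + 1)) :=
          Finset.sum_le_sum step
      _ = (fun j : ℕ => 1 / (x + j)) 0 - (fun j : ℕ => 1 / (x + j)) n := Finset.sum_range_sub' _ n
      _ ≤ 1 / x := by
          have : (0:ℝ) ≤ 1 / (x + n) := by positivity
          simp only [Nat.cast_zero, add_zero] at this ⊢
          linarith
  simp only [Nat.cast_zero, add_zero] at h0 ⊢
  have h2 : (2:ℝ)/x = 1/x + 1/x := by ring
  linarith

lemma factor_bound (s : ℂ) (j : ℕ) (hs : 1 ≤ s.re) :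
    ‖s + j‖ ≤ (s.re + j) * Real.exp (s.im ^ 2 / 2 * (1 / (s.re + j) ^ 2)) := by
  have hxj : (0:ℝ) < s.re + j := by positivity
  have hrhs : (0:ℝ) ≤ (s.re + j) * Real.exp (s.im ^ 2 / 2 * (1 / (s.re + j) ^ 2)) := by positivity
  rw [← pow_le_pow_iff_left₀ (norm_nonneg _) hrhs two_ne_zero]
  have hn : ‖s + j‖ ^ 2 = (s.re + j) ^ 2 + s.im ^ 2 := by
    rw [Complex.sq_norm, Complex.normSq_apply]
    simp [Complex.add_re, Complex.add_im]
    ring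
  rw [hn, mul_pow, ← Real.exp_nat_mul]
  have hexp : 1 + s.im ^ 2 / (s.re + j) ^ 2 ≤ Real.exp ((2:ℕ) * (s.im ^ 2 / 2 * (1 / (s.re + j) ^ 2))) := by
    have := Real.add_one_le_exp (s.im ^ 2 / (s.re + j) ^ 2)
    have e : ((2:ℕ):ℝ) * (s.im ^ 2 / 2 * (1 / (s.re + j) ^ 2)) = s.im ^ 2 / (s.re + j) ^ 2 := by
      push_cast; ring
    rw [e]
    linarith
  calc (s.re + j) ^ 2 + s.im ^ 2
      = (s.re + j) ^ 2 * (1 + s.im ^ 2 / (s.re + j) ^ 2) := by field_simp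
    _ ≤ (s.re + j) ^ 2 * Real.exp ((2:ℕ) * (s.im ^ 2 / 2 * (1 / (s.re + j) ^ 2))) := by
        apply mul_le_mul_of_nonneg_left hexp (by positivity)

lemma norm_gamma_lower (s : ℂ) (hs : 1 ≤ s.re) :
    Real.Gamma s.re * Real.exp (-(s.im ^ 2 / s.re)) ≤ ‖Complex.Gamma s‖ := by
  have hx0 : (0:ℝ) < s.re := by linarith
  refine le_of_tendsto_of_tendsto ((Real.GammaSeq_tendsto_Gamma s.re).mul_const _)
    (Complex.GammaSeq_tendsto_Gamma s).norm ?_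
  filter_upwards [eventually_ge_atTop 1] with n hn
  have hn0 : (0:ℝ) < n := by exact_mod_cast hn
  -- norm of complex GammaSeq
  have hnorm : ‖Complex.GammaSeq s n‖ =
      (n:ℝ) ^ s.re * (n.factorial : ℝ) / ∏ j ∈ Finset.range (n + 1), ‖s + j‖ := by
    rw [Complex.GammaSeq, norm_div, norm_mul, Complex.norm_natCast]
    rw [show ((n:ℂ)) = ((n:ℝ):ℂ) from by norm_cast,
      Complex.norm_cpow_eq_rpow_re_of_pos hn0]
    congr 1
    exact norm_prod _ _
  rw [hnorm, Real.GammaSeq]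
  have hprodpos : ∀ j ∈ Finset.range (n+1), (0:ℝ) < s.re + j := by
    intro j _; positivity
  have hP1 : (0:ℝ) < ∏ j ∈ Finset.range (n + 1), (s.re + j) := Finset.prod_pos hprodpos
  have hP2 : (0:ℝ) < ∏ j ∈ Finset.range (n + 1), ‖s + j‖ := by
    apply Finset.prod_pos
    intro j hj
    calc (0:ℝ) < s.re + j := hprodpos j hj
      _ ≤ ‖s + j‖ := by
          have := Complex.re_le_norm (s + j)
          simpa [Complex.add_re] using this
  -- key product inequality
  have hkey : ∏ j ∈ Finset.range (n + 1), ‖s + j‖ ≤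
      (∏ j ∈ Finset.range (n + 1), (s.re + j)) * Real.exp (s.im ^ 2 / s.re) := by
    calc ∏ j ∈ Finset.range (n + 1), ‖s + j‖
        ≤ ∏ j ∈ Finset.range (n + 1), ((s.re + j) * Real.exp (s.im ^ 2 / 2 * (1 / (s.re + j) ^ 2))) := by
          apply Finset.prod_le_prod (fun j _ => norm_nonneg _) (fun j _ => factor_bound s j hs)
      _ = (∏ j ∈ Finset.range (n + 1), (s.re + j)) *
            Real.exp (∑ j ∈ Finset.range (n + 1), s.im ^ 2 / 2 * (1 / (s.re + j) ^ 2)) := by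
          rw [Finset.prod_mul_distrib, Real.exp_sum]
      _ ≤ (∏ j ∈ Finset.range (n + 1), (s.re + j)) * Real.exp (s.im ^ 2 / s.re) := by
          apply mul_le_mul_of_nonneg_left _ (le_of_lt hP1)
          apply Real.exp_le_exp.mpr
          rw [← Finset.mul_sum]
          calc s.im ^ 2 / 2 * ∑ j ∈ Finset.range (n + 1), 1 / (s.re + j) ^ 2
              ≤ s.im ^ 2 / 2 * (2 / s.re) := by
                apply mul_le_mul_of_nonneg_left (sum_inv_sq_le s.re hs n) (by positivity)
            _ = s.im ^ 2 / s.re := by field_simp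
  -- combine
  have hnum : (0:ℝ) ≤ (n:ℝ) ^ s.re * (n.factorial : ℝ) := by positivity
  have heq : (n:ℝ) ^ s.re * (n.factorial : ℝ) / (∏ j ∈ Finset.range (n + 1), (s.re + j)) *
      Real.exp (-(s.im ^ 2 / s.re)) =
      (n:ℝ) ^ s.re * (n.factorial : ℝ) /
        ((∏ j ∈ Finset.range (n + 1), (s.re + j)) * Real.exp (s.im ^ 2 / s.re)) := by
    rw [Real.exp_neg]
    field_simp
  rw [heq]
  gcongr

lemma real_gamma_lb (x L : ℝ) (hx : 1 ≤ x) (hL : 1 ≤ L) :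
    L ^ (x - 1) * Real.exp (-(L + 1)) ≤ Real.Gamma x := by
  have hx0 : (0:ℝ) < x := by linarith
  have hL0 : (0:ℝ) < L := by linarith
  rw [Real.Gamma_eq_integral hx0]
  have hint : IntegrableOn (fun t : ℝ => Real.exp (-t) * t ^ (x - 1)) (Ioi 0) :=
    Real.GammaIntegral_convergent hx0
  have hsub : Ioc L (L + 1) ⊆ Ioi (0:ℝ) := fun t ht => lt_of_lt_of_le hL0 ht.1.le
  have step1 : L ^ (x - 1) * Real.exp (-(L + 1)) ≤
      ∫ t in Ioc L (L + 1), Real.exp (-t) * t ^ (x - 1) := by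
    have hvol : (volume (Ioc L (L + 1))).toReal = 1 := by
      rw [Real.volume_Ioc]
      norm_num
    have := setIntegral_ge_of_const_le (μ := volume) (c := Real.exp (-(L + 1)) * L ^ (x - 1))
      measurableSet_Ioc (by rw [Real.volume_Ioc]; exact ENNReal.ofReal_ne_top)
      (fun t ht => by
        have ht1 : L ≤ t := ht.1.le
        have ht2 : t ≤ L + 1 := ht.2
        apply mul_le_mul
        · exact Real.exp_le_exp.mpr (by linarith)
        · exact Real.rpow_le_rpow hL0.le ht1 (by linarith)
        · positivity
        · positivity)
      (hint.mono_set hsub)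
    rw [measureReal_def, hvol, one_smul] at this
    linarith [this]
  calc L ^ (x - 1) * Real.exp (-(L + 1)) ≤ ∫ t in Ioc L (L + 1), Real.exp (-t) * t ^ (x - 1) := step1
    _ ≤ ∫ t in Ioi 0, Real.exp (-t) * t ^ (x - 1) := by
        apply setIntegral_mono_set hint
        · filter_upwards [ae_restrict_mem measurableSet_Ioi] with t ht
          have : (0:ℝ) < t := ht
          positivity
        · exact HasSubset.Subset.eventuallyLE hsub

lemma prab_summable (ς τ δ z : ℂ) (hς : 0 < ς.re) : Summable (prabTerm ς τ δ z) := by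
  set a : ℝ := ς.re with ha
  set B : ℝ := |ς.im| + |τ.im| + 1 with hB
  set Cc : ℝ := B ^ 2 * (1 + 2 / a) with hCc
  set R : ℝ := (‖δ‖ + 1) * ‖z‖ with hR
  set L : ℝ := max 1 ((2 * R * Real.exp Cc + 1) ^ ((2:ℝ) / a)) with hLdef
  have hB0 : (0:ℝ) < B := by positivity
  have hR0 : (0:ℝ) ≤ R := by positivity
  have hCc0 : (0:ℝ) ≤ Cc := by positivity
  have hL1 : (1:ℝ) ≤ L := le_max_left _ _
  have hL0 : (0:ℝ) < L := by linarith
  have hLpow : 2 * R * Real.exp Cc + 1 ≤ L ^ (a / 2) := by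
    have h1 : (0:ℝ) < 2 * R * Real.exp Cc + 1 := by positivity
    calc 2 * R * Real.exp Cc + 1
        = ((2 * R * Real.exp Cc + 1) ^ ((2:ℝ) / a)) ^ (a / 2) := by
          rw [← Real.rpow_mul h1.le]
          rw [show (2:ℝ) / a * (a / 2) = 1 from by field_simp, Real.rpow_one]
      _ ≤ L ^ (a / 2) :=
          Real.rpow_le_rpow (Real.rpow_nonneg h1.le _) (le_max_right _ _) (by positivity)
  have ha0 : a ≠ 0 := ne_of_gt hς
  clear_value B Cc R L
  obtain ⟨K, hK⟩ := exists_nat_ge ((1 - τ.re) * (2 / a))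
  apply Summable.of_norm_bounded_eventually_nat
    (g := fun k => Real.exp (Cc + L + 1) * (1 / 2 : ℝ) ^ k)
    ((summable_geometric_of_lt_one (by norm_num) (by norm_num)).mul_left _)
  filter_upwards [eventually_ge_atTop K] with k hk
  set s : ℂ := ς * k + τ with hsdef
  have hsre : s.re = a * k + τ.re := by
    simp [hsdef, Complex.add_re, Complex.mul_re, ha]
  have hsim : s.im = ς.im * k + τ.im := by
    simp [hsdef, Complex.add_im, Complex.mul_im]
  have hkK : ((1 - τ.re) * (2 / a)) ≤ (k:ℝ) := le_trans hK (by exact_mod_cast hk)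
  have hxk : a / 2 * k + 1 ≤ s.re := by
    rw [hsre]
    have h2 := mul_le_mul_of_nonneg_left hkK (by positivity : (0:ℝ) ≤ a / 2)
    have he : a / 2 * ((1 - τ.re) * (2 / a)) = 1 - τ.re := by field_simp
    rw [he] at h2
    linarith
  have hx1 : 1 ≤ s.re := by
    have hk0 : (0:ℝ) ≤ a / 2 * k := by positivity
    linarith
  have hsre0 : 0 < s.re := by linarith
  have him : s.im ^ 2 ≤ B ^ 2 * ((k:ℝ) + 1) ^ 2 := by
    have h1 : |s.im| ≤ B * ((k:ℝ) + 1) := by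
      rw [hsim]
      calc |ς.im * k + τ.im| ≤ |ς.im * k| + |τ.im| := abs_add_le _ _
        _ = |ς.im| * k + |τ.im| := by rw [abs_mul, Nat.abs_cast]
        _ ≤ B * (k + 1) := by
            nlinarith [abs_nonneg ς.im, abs_nonneg τ.im, (Nat.cast_nonneg k : (0:ℝ) ≤ k)]
    calc s.im ^ 2 = |s.im| ^ 2 := (sq_abs _).symm
      _ ≤ (B * ((k:ℝ) + 1)) ^ 2 := by nlinarith [abs_nonneg s.im]
      _ = B ^ 2 * ((k:ℝ) + 1) ^ 2 := by ring
  have hdiv : s.im ^ 2 / s.re ≤ Cc * ((k:ℝ) + 1) := by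
    rw [div_le_iff₀ hsre0]
    have hq : ((k:ℝ) + 1) ≤ (1 + 2 / a) * (a / 2 * k + 1) := by
      have he : (1 + 2 / a) * (a / 2 * (k:ℝ) + 1) = a / 2 * k + 1 + (k:ℝ) + 2 / a := by
        field_simp; ring
      rw [he]
      have h3 : (0:ℝ) ≤ a / 2 * k := by positivity
      have h4 : (0:ℝ) ≤ 2 / a := by positivity
      linarith
    calc s.im ^ 2 ≤ B ^ 2 * ((k:ℝ) + 1) ^ 2 := him
      _ = B ^ 2 * ((k:ℝ) + 1) * ((k:ℝ) + 1) := by ring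
      _ ≤ B ^ 2 * ((k:ℝ) + 1) * ((1 + 2 / a) * (a / 2 * k + 1)) :=
          mul_le_mul_of_nonneg_left hq (by positivity)
      _ ≤ B ^ 2 * ((k:ℝ) + 1) * ((1 + 2 / a) * s.re) :=
          mul_le_mul_of_nonneg_left (mul_le_mul_of_nonneg_left hxk (by positivity)) (by positivity)
      _ = Cc * ((k:ℝ) + 1) * s.re := by rw [hCc]; ring
  have hGlow : (L ^ (a / 2)) ^ k * Real.exp (-(L + 1)) * Real.exp (-(Cc * ((k:ℝ) + 1))) ≤
      ‖Complex.Gamma s‖ := by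
    have h1 := norm_gamma_lower s hx1
    have h2 : L ^ (a / 2 * (k:ℝ)) * Real.exp (-(L + 1)) ≤ Real.Gamma s.re := by
      have h3 := real_gamma_lb s.re L hx1 hL1
      have h4 : L ^ (a / 2 * (k:ℝ)) ≤ L ^ (s.re - 1) :=
        Real.rpow_le_rpow_of_exponent_le hL1 (by linarith)
      have h5 := mul_le_mul_of_nonneg_right h4 (le_of_lt (Real.exp_pos (-(L + 1))))
      linarith
    have h5 : Real.exp (-(Cc * ((k:ℝ) + 1))) ≤ Real.exp (-(s.im ^ 2 / s.re)) :=
      Real.exp_le_exp.mpr (by linarith)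
    have hpow : L ^ (a / 2 * (k:ℝ)) = (L ^ (a / 2)) ^ k := by
      rw [Real.rpow_mul hL0.le, Real.rpow_natCast]
    calc (L ^ (a / 2)) ^ k * Real.exp (-(L + 1)) * Real.exp (-(Cc * ((k:ℝ) + 1)))
        ≤ Real.Gamma s.re * Real.exp (-(s.im ^ 2 / s.re)) := by
          rw [← hpow]
          exact mul_le_mul h2 h5 (le_of_lt (Real.exp_pos _)) (Real.Gamma_pos_of_pos hsre0).le
      _ ≤ ‖Complex.Gamma s‖ := h1
  have hGpos : 0 < ‖Complex.Gamma s‖ := lt_of_lt_of_le (by positivity) hGlow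
  have hfac : (0:ℝ) < (k.factorial : ℝ) := by exact_mod_cast k.factorial_pos
  have hnormterm : ‖prabTerm ς τ δ z k‖ ≤ R ^ k / ‖Complex.Gamma s‖ := by
    rw [prabTerm, ← hsdef, norm_div, norm_mul, norm_mul, norm_pow, Complex.norm_natCast]
    have hprod : ‖∏ i ∈ Finset.range k, (δ + (i:ℂ))‖ ≤ (‖δ‖ + 1) ^ k * (k.factorial : ℝ) := by
      rw [norm_prod]
      calc ∏ i ∈ Finset.range k, ‖δ + (i:ℂ)‖
          ≤ ∏ i ∈ Finset.range k, ((‖δ‖ + 1) * ((i:ℝ) + 1)) := by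
            apply Finset.prod_le_prod (fun i _ => norm_nonneg _)
            intro i _
            calc ‖δ + (i:ℂ)‖ ≤ ‖δ‖ + ‖(i:ℂ)‖ := norm_add_le _ _
              _ = ‖δ‖ + i := by rw [Complex.norm_natCast]
              _ ≤ (‖δ‖ + 1) * ((i:ℝ) + 1) := by
                  nlinarith [norm_nonneg δ, (Nat.cast_nonneg i : (0:ℝ) ≤ i)]
        _ = (‖δ‖ + 1) ^ k * (k.factorial : ℝ) := by
            rw [Finset.prod_mul_distrib, Finset.prod_const, Finset.card_range]
            congr 1
            exact_mod_cast Finset.prod_range_add_one_eq_factorial k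
    calc ‖∏ i ∈ Finset.range k, (δ + (i:ℂ))‖ * ‖z‖ ^ k / ((k.factorial : ℝ) * ‖Complex.Gamma s‖)
        ≤ (‖δ‖ + 1) ^ k * (k.factorial : ℝ) * ‖z‖ ^ k / ((k.factorial : ℝ) * ‖Complex.Gamma s‖) := by
          gcongr
      _ = R ^ k / ‖Complex.Gamma s‖ := by
          rw [hR, mul_pow, div_eq_div_iff (mul_pos hfac hGpos).ne' hGpos.ne']
          ring
  have hPpos : (0:ℝ) < (L ^ (a / 2)) ^ k := by positivity
  calc ‖prabTerm ς τ δ z k‖ ≤ R ^ k / ‖Complex.Gamma s‖ := hnormterm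
    _ ≤ R ^ k / ((L ^ (a / 2)) ^ k * Real.exp (-(L + 1)) * Real.exp (-(Cc * ((k:ℝ) + 1)))) := by
        gcongr
    _ = Real.exp (Cc + L + 1) * (R * Real.exp Cc / L ^ (a / 2)) ^ k := by
        have e1 : Real.exp (-(L + 1)) = (Real.exp (L + 1))⁻¹ := Real.exp_neg _
        have e2 : Real.exp (-(Cc * ((k:ℝ) + 1))) = ((Real.exp Cc) ^ k * Real.exp Cc)⁻¹ := by
          rw [Real.exp_neg]
          congr 1
          rw [← Real.exp_nat_mul, ← Real.exp_add]
          congr 1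
          ring
        have e3 : Real.exp (Cc + L + 1) = Real.exp Cc * Real.exp (L + 1) := by
          rw [← Real.exp_add]
          congr 1
          ring
        rw [e1, e2, e3, div_pow, mul_pow]
        have hE1 : (0:ℝ) < Real.exp (L + 1) := Real.exp_pos _
        have hE2 : (0:ℝ) < Real.exp Cc := Real.exp_pos _
        field_simp
    _ ≤ Real.exp (Cc + L + 1) * (1 / 2 : ℝ) ^ k := by
        apply mul_le_mul_of_nonneg_left _ (Real.exp_pos _).le
        apply pow_le_pow_left₀ (by positivity)
        rw [div_le_div_iff₀ (by positivity) (by norm_num)]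
        have hE2 : (0:ℝ) < Real.exp Cc := Real.exp_pos _
        nlinarith [hLpow, hR0, hE2]

lemma prod_shift (δ : ℂ) (k : ℕ) :
    δ * ∏ i ∈ Finset.range k, (δ + 1 + i) = (δ + k) * ∏ i ∈ Finset.range k, (δ + i) := by
  induction k with
  | zero => simp
  | succ n ih =>
    rw [Finset.prod_range_succ, Finset.prod_range_succ]
    push_cast
    push_cast at ih
    linear_combination (δ + 1 + (n:ℂ)) * ih

theorem prabhakar_recurrence_three_term (ς τ δ z : ℂ) (hς : 0 < ς.re)
    (hτ : 1 < τ.re) :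
    (τ - ς * δ - 1) * cPrab ς τ δ z =
      cPrab ς (τ - 1) δ z - ς * δ * cPrab ς τ (δ + 1) z := by
  have hsum1 : Summable (prabTerm ς τ δ z) := prab_summable ς τ δ z hς
  have hsum2 : Summable (prabTerm ς τ (δ + 1) z) := prab_summable ς τ (δ + 1) z hς
  have key : ∀ k : ℕ, prabTerm ς (τ - 1) δ z k =
      (τ - ς * δ - 1) * prabTerm ς τ δ z k + ς * δ * prabTerm ς τ (δ + 1) z k := by
    intro k
    have hre : 0 < (ς * k + τ - 1).re := by
      have h1 : (ς * (k:ℂ)).re = ς.re * k := by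
        simp [Complex.mul_re]
      simp only [Complex.sub_re, Complex.add_re, Complex.one_re, h1]
      have : (0:ℝ) ≤ ς.re * k := by positivity
      linarith
    have hs0 : (ς * k + τ - 1) ≠ 0 := by
      intro h
      rw [h] at hre
      simp at hre
    have hG' : Complex.Gamma (ς * k + τ - 1) ≠ 0 := by
      apply Complex.Gamma_ne_zero
      intro m h
      rw [h] at hre
      simp only [Complex.neg_re, Complex.natCast_re] at hre
      have : (0:ℝ) ≤ (m:ℝ) := Nat.cast_nonneg m
      linarith
    have hGrec : Complex.Gamma (ς * k + τ) = (ς * k + τ - 1) * Complex.Gamma (ς * k + τ - 1) := by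
      have h := Complex.Gamma_add_one (ς * k + τ - 1) hs0
      rw [sub_add_cancel] at h
      exact h
    have hP := prod_shift δ k
    have hfac : ((k.factorial : ℂ)) ≠ 0 := by
      exact_mod_cast k.factorial_pos.ne'
    have e1 : prabTerm ς (τ - 1) δ z k =
        (ς * k + τ - 1) * ((∏ i ∈ Finset.range k, (δ + i)) * z ^ k) /
          ((k.factorial : ℂ) * Complex.Gamma (ς * k + τ)) := by
      rw [prabTerm, show ς * (k:ℂ) + (τ - 1) = ς * k + τ - 1 from by ring, hGrec]
      field_simp
    have e2 : ς * δ * prabTerm ς τ (δ + 1) z k =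
        ς * (δ + k) * ((∏ i ∈ Finset.range k, (δ + i)) * z ^ k) /
          ((k.factorial : ℂ) * Complex.Gamma (ς * k + τ)) := by
      rw [prabTerm]
      linear_combination (ς * z ^ k / ((k.factorial : ℂ) * Complex.Gamma (ς * k + τ))) * hP
    rw [e1, e2, prabTerm]
    ring
  have h2 : cPrab ς (τ - 1) δ z =
      (τ - ς * δ - 1) * cPrab ς τ δ z + ς * δ * cPrab ς τ (δ + 1) z := by
    unfold cPrab
    rw [tsum_congr key, Summable.tsum_add (hsum1.mul_left _) (hsum2.mul_left _),
      tsum_mul_left, tsum_mul_left]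
  rw [h2]
  ring
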